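/- For every ℓ ∈ ℕ and every v ≥ 0, the Laguerre function satisfies |𝓛_ℓ(v)| = |L_ℓ(v) e^{−v/2}| ≤ 1. -/

import Mathlib

open Real

/-- Laguerre polynomial of type 0 and degree ℓ. -/
noncomputable def laguerrePoly (ℓ : ℕ) (v : ℝ) : ℝ :=
  ∑ k ∈ Finset.range (ℓ + 1), (-1 : ℝ) ^ k * (ℓ.choose (ℓ - k) : ℝ) * v ^ k / (k.factorial : ℝ)

/-- Laguerre function `𝓛_ℓ(v) = L_ℓ(v) e^{-v/2}`. -/
noncomputable def laguerreFun (ℓ : ℕ) (v : ℝ) : ℝ := laguerrePoly ℓ v * Real.exp (-v / 2)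

/-! Work in the Fock space of power series, with pairing `⟨f, g⟩ = ∑ m! f_m g_m`. Multiplication
by `e^{bz}` is adjoint to translation by `b`, whence
`⟨e^{bz} p(z), e^{cz} q(z)⟩ = e^{bc} ⟨p(z + c), q(z + b)⟩` for polynomials `p, q`, and so
`f_b = e^{bz} (z - b)^n` satisfy `⟨f_b, f_c⟩ = n! e^{bc} L_n((b - c)²)`. For `b = √v / 2` the
pairing of `f_b` with `f_{-b}` is `n! e^{-v/4} L_n(v)`, while both have squared norm `n! e^{v/4}`;
`|⟨f, g⟩| ≤ (⟨f, f⟩ + ⟨g, g⟩) / 2` then gives `|L_n(v)| ≤ e^{v/2}`. -/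

open Polynomial Finset
open scoped Nat

noncomputable def expMulCoeff (b : ℝ) (p : ℝ[X]) (m : ℕ) : ℝ :=
  PowerSeries.coeff m (PowerSeries.rescale b (PowerSeries.exp ℝ) * (p : PowerSeries ℝ))

lemma expMulCoeff_X_pow (b : ℝ) (j m : ℕ) :
    expMulCoeff b (X ^ j) m = if j ≤ m then b ^ (m - j) / (m - j)! else 0 := by
  rw [expMulCoeff, Polynomial.coe_pow, Polynomial.coe_X, PowerSeries.coeff_mul_X_pow']
  split_ifs <;> simp [PowerSeries.coeff_rescale, PowerSeries.coeff_exp, div_eq_mul_inv]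

lemma expMulCoeff_eq_sum (b : ℝ) {p : ℝ[X]} {N : ℕ} (hp : p.natDegree < N) (m : ℕ) :
    expMulCoeff b p m = ∑ j ∈ range N, p.coeff j * expMulCoeff b (X ^ j) m := by
  conv_lhs => rw [p.as_sum_range' N hp]
  simp only [expMulCoeff, ← C_mul_X_pow_eq_monomial, ← coeToPowerSeries.ringHom_apply, map_sum,
    mul_sum]
  refine sum_congr rfl fun j _ => ?_
  simp [mul_left_comm _ (PowerSeries.C _), PowerSeries.coeff_C_mul]

lemma coeff_comp_eq_sum {p : ℝ[X]} {N : ℕ} (hp : p.natDegree < N) (r : ℝ[X]) (i : ℕ) :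
    (p.comp r).coeff i = ∑ j ∈ range N, p.coeff j * (r ^ j).coeff i := by
  conv_lhs => rw [p.as_sum_range' N hp]
  simp [← C_mul_X_pow_eq_monomial, finsetSum_coeff]

lemma hasSum_choose_mul_pow_div_factorial (x : ℝ) (r : ℕ) :
    HasSum (fun s => (s.choose r : ℝ) * x ^ s / s !) (x ^ r / r ! * exp x) := by
  refine (hasSum_nat_add_iff' r).mp ?_
  have hzero : ∑ s ∈ range r, (s.choose r : ℝ) * x ^ s / s ! = 0 :=
    sum_eq_zero fun s hs => by simp [Nat.choose_eq_zero_of_lt (mem_range.mp hs)]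
  rw [hzero, sub_zero]
  have hexp : HasSum (fun s => x ^ s / s !) (exp x) :=
    exp_eq_exp_ℝ ▸ NormedSpace.expSeries_div_hasSum_exp x
  have hterm : ∀ s, ((s + r).choose r : ℝ) * x ^ (s + r) / (s + r)! =
      x ^ r / r ! * (x ^ s / s !) := by
    intro s
    have h := congrArg (Nat.cast (R := ℝ)) (Nat.add_choose_mul_factorial_mul_factorial s r)
    push_cast at h
    field_simp
    rw [← h]
    ring
  simpa only [hterm] using hexp.mul_left (x ^ r / r !)

lemma hasSum_add_choose_mul_pow_div_factorial (x : ℝ) (k j : ℕ) :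
    HasSum (fun s => ((k + s).choose j : ℝ) * x ^ s / s !)
      (∑ i ∈ range (j + 1), (k.choose i : ℝ) * (x ^ (j - i) / (j - i)! * exp x)) := by
  have hvdm : ∀ s, ((k + s).choose j : ℝ) * x ^ s / s ! =
      ∑ i ∈ range (j + 1), (k.choose i : ℝ) * ((s.choose (j - i) : ℝ) * x ^ s / s !) := by
    intro s
    rw [Nat.add_choose_eq, Finset.Nat.sum_antidiagonal_eq_sum_range_succ_mk]
    push_cast
    rw [sum_mul, sum_div]
    exact sum_congr rfl fun i _ => by ring
  simpa only [hvdm] using hasSum_sum fun i _ =>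
    (hasSum_choose_mul_pow_div_factorial x (j - i)).mul_left (k.choose i : ℝ)

lemma hasSum_expMulCoeff_X_pow_of_le (b c : ℝ) {j k : ℕ} (hjk : j ≤ k) :
    HasSum (fun m => (m ! : ℝ) * expMulCoeff b (X ^ j) m * expMulCoeff c (X ^ k) m)
      (exp (b * c) * ∑ i ∈ range (j + 1),
        (i ! : ℝ) * ((X + C c) ^ j).coeff i * ((X + C b) ^ k).coeff i) := by
  obtain ⟨d, rfl⟩ := Nat.exists_eq_add_of_le hjk
  refine (hasSum_nat_add_iff' (j + d)).mp ?_
  have hhead : ∑ m ∈ range (j + d),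
      (m ! : ℝ) * expMulCoeff b (X ^ j) m * expMulCoeff c (X ^ (j + d)) m = 0 :=
    sum_eq_zero fun m hm => by simp [expMulCoeff_X_pow, (mem_range.mp hm).not_ge]
  have hterm : ∀ s, ((s + (j + d))! : ℝ) * expMulCoeff b (X ^ j) (s + (j + d)) *
      expMulCoeff c (X ^ (j + d)) (s + (j + d)) =
        j ! * b ^ d * (((j + d + s).choose j : ℝ) * (b * c) ^ s / s !) := by
    intro s
    have hfac :=
      congrArg (Nat.cast (R := ℝ)) (Nat.add_choose_mul_factorial_mul_factorial (s + d) j)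
    push_cast at hfac
    rw [expMulCoeff_X_pow, expMulCoeff_X_pow, if_pos (by omega), if_pos (by omega),
      show s + (j + d) - j = s + d by omega, Nat.add_sub_cancel,
      show s + (j + d) = s + d + j by omega, show j + d + s = s + d + j by omega, ← hfac]
    field_simp
    ring
  have hval : j ! * b ^ d * ∑ i ∈ range (j + 1),
      ((j + d).choose i : ℝ) * ((b * c) ^ (j - i) / (j - i)! * exp (b * c)) =
        exp (b * c) * ∑ i ∈ range (j + 1),
          (i ! : ℝ) * ((X + C c) ^ j).coeff i * ((X + C b) ^ (j + d)).coeff i := by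
    rw [mul_sum, mul_sum]
    refine sum_congr rfl fun i hi => ?_
    obtain ⟨e, rfl⟩ := Nat.exists_eq_add_of_le (Nat.lt_succ_iff.mp (mem_range.mp hi))
    have hfac := congrArg (Nat.cast (R := ℝ)) (Nat.add_choose_mul_factorial_mul_factorial e i)
    push_cast at hfac
    simp only [coeff_X_add_C_pow, show i + e - i = e by omega, show i + e + d - i = e + d by omega]
    rw [add_comm i e, ← hfac]
    field_simp
    ring
  rw [hhead, sub_zero, ← hval]
  simpa only [hterm] using (hasSum_add_choose_mul_pow_div_factorial (b * c) (j + d) j).mul_left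
    (j ! * b ^ d)

lemma hasSum_expMulCoeff_X_pow (b c : ℝ) {j k N : ℕ} (hj : j < N) (hk : k < N) :
    HasSum (fun m => (m ! : ℝ) * expMulCoeff b (X ^ j) m * expMulCoeff c (X ^ k) m)
      (exp (b * c) * ∑ i ∈ range N,
        (i ! : ℝ) * ((X + C c) ^ j).coeff i * ((X + C b) ^ k).coeff i) := by
  wlog hjk : j ≤ k generalizing b c j k
  · simpa only [mul_comm c b, mul_right_comm _ (expMulCoeff c _ _),
      mul_right_comm _ (((X + C b) ^ k).coeff _)] using this c b hk hj (le_of_not_ge hjk)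
  rw [← sum_subset (range_subset_range.2 hj) fun i _ hi => ?_]
  · exact hasSum_expMulCoeff_X_pow_of_le b c hjk
  rw [coeff_X_add_C_pow, Nat.choose_eq_zero_of_lt (by simpa using hi)]
  simp

lemma hasSum_expMulCoeff (b c : ℝ) {p q : ℝ[X]} {N : ℕ} (hp : p.natDegree < N)
    (hq : q.natDegree < N) :
    HasSum (fun m => (m ! : ℝ) * expMulCoeff b p m * expMulCoeff c q m)
      (exp (b * c) * ∑ i ∈ range N,
        (i ! : ℝ) * (p.comp (X + C c)).coeff i * (q.comp (X + C b)).coeff i) := by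
  have hterm : ∀ m, (m ! : ℝ) * expMulCoeff b p m * expMulCoeff c q m =
      ∑ j ∈ range N, ∑ k ∈ range N, p.coeff j * q.coeff k *
        ((m ! : ℝ) * expMulCoeff b (X ^ j) m * expMulCoeff c (X ^ k) m) := by
    intro m
    rw [expMulCoeff_eq_sum b hp, expMulCoeff_eq_sum c hq, mul_assoc, sum_mul_sum,
      mul_sum]
    refine sum_congr rfl fun j _ => ?_
    rw [mul_sum]
    exact sum_congr rfl fun k _ => by ring
  have hval : ∑ j ∈ range N, ∑ k ∈ range N, p.coeff j * q.coeff k * (exp (b * c) *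
      ∑ i ∈ range N, (i ! : ℝ) * ((X + C c) ^ j).coeff i * ((X + C b) ^ k).coeff i) =
        exp (b * c) * ∑ i ∈ range N,
          (i ! : ℝ) * (p.comp (X + C c)).coeff i * (q.comp (X + C b)).coeff i := by
    simp only [coeff_comp_eq_sum hp, coeff_comp_eq_sum hq, mul_sum, sum_mul]
    refine (sum_congr rfl fun k _ => sum_comm).trans ?_
    rw [sum_comm]
    exact sum_congr rfl fun i _ => sum_comm.trans <|
      sum_congr rfl fun k _ => sum_congr rfl fun j _ => by ring
  rw [← hval]
  simpa only [hterm] using hasSum_sum fun j hj => hasSum_sum fun k hk =>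
    (hasSum_expMulCoeff_X_pow b c (mem_range.1 hj) (mem_range.1 hk)).mul_left
      (p.coeff j * q.coeff k)

lemma laguerrePoly_zero_right (n : ℕ) : laguerrePoly n 0 = 1 := by
  simp [laguerrePoly, sum_range_succ']

lemma sum_factorial_mul_coeff_X_add_C_pow (d : ℝ) (n : ℕ) :
    ∑ i ∈ range (n + 1), (i ! : ℝ) * ((X + C d) ^ n).coeff i * ((X + C (-d)) ^ n).coeff i =
      n ! * laguerrePoly n (d ^ 2) := by
  rw [laguerrePoly, mul_sum, ← sum_range_reflect]
  refine sum_congr rfl fun i hi => ?_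
  obtain ⟨k, rfl⟩ := Nat.exists_eq_add_of_le (mem_range_succ_iff.1 hi)
  have hfac := congrArg (Nat.cast (R := ℝ)) (Nat.add_choose_mul_factorial_mul_factorial i k)
  push_cast at hfac
  simp only [coeff_X_add_C_pow, show i + k + 1 - 1 - i = k by omega,
    show i + k - k = i by omega, show i + k - i = k by omega]
  rw [← hfac, neg_pow, ← pow_mul, mul_comm 2 i, pow_mul]
  field_simp

lemma hasSum_expMulCoeff_X_sub_C_pow (b c : ℝ) (n : ℕ) :
    HasSum (fun m => (m ! : ℝ) * expMulCoeff b ((X - C b) ^ n) m *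
      expMulCoeff c ((X - C c) ^ n) m) (n ! * exp (b * c) * laguerrePoly n ((b - c) ^ 2)) := by
  have hdeg : ∀ a : ℝ, ((X - C a) ^ n).natDegree < n + 1 := fun a =>
    Nat.lt_succ_of_le ((natDegree_pow_le_of_le n (natDegree_X_sub_C_le a)).trans (mul_one n).le)
  have hcomp : ∀ a a' : ℝ, ((X - C a) ^ n).comp (X + C a') = (X + C (a' - a)) ^ n := by
    intro a a'
    simp only [pow_comp, sub_comp, X_comp, C_comp, C_sub]
    ring
  have h := hasSum_expMulCoeff b c (hdeg b) (hdeg c)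
  rwa [hcomp, hcomp, show b - c = -(c - b) by ring, sum_factorial_mul_coeff_X_add_C_pow,
    show (c - b) ^ 2 = (b - c) ^ 2 by ring, mul_left_comm, ← mul_assoc] at h

lemma abs_le_add_div_two_of_hasSum {ι : Type*} {w f g : ι → ℝ} {x y z : ℝ}
    (hw : ∀ i, 0 ≤ w i)
    (hfg : HasSum (fun i => w i * f i * g i) x) (hff : HasSum (fun i => w i * f i * f i) y)
    (hgg : HasSum (fun i => w i * g i * g i) z) : |x| ≤ (y + z) / 2 := by
  have hsum := (hff.add hgg).div_const 2
  refine abs_le.2 ⟨?_, hasSum_le (fun i => ?_) hfg hsum⟩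
  · refine neg_le.1 (hasSum_le (fun i => ?_) hfg.neg hsum)
    nlinarith [mul_nonneg (hw i) (sq_nonneg (f i + g i))]
  · nlinarith [mul_nonneg (hw i) (sq_nonneg (f i - g i))]

lemma abs_laguerrePoly_le_exp_half (n : ℕ) {v : ℝ} (hv : 0 ≤ v) :
    |laguerrePoly n v| ≤ exp (v / 2) := by
  set b := √v / 2
  have hb : b * b = v / 4 := by rw [div_mul_div_comm, mul_self_sqrt hv]; ring
  have key := abs_le_add_div_two_of_hasSum (fun m => Nat.cast_nonneg (m !))
    (hasSum_expMulCoeff_X_sub_C_pow b (-b) n) (hasSum_expMulCoeff_X_sub_C_pow b b n)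
    (hasSum_expMulCoeff_X_sub_C_pow (-b) (-b) n)
  rw [show (b - -b) ^ 2 = v by linear_combination 4 * hb, mul_neg, neg_mul_neg, hb, sub_self,
    sub_self, zero_pow two_ne_zero, laguerrePoly_zero_right, abs_mul, abs_mul, abs_exp,
    Nat.abs_cast] at key
  refine le_of_mul_le_mul_left ?_ (by positivity : (0 : ℝ) < n ! * exp (-(v / 4)))
  calc n ! * exp (-(v / 4)) * |laguerrePoly n v| ≤ n ! * exp (v / 4) := by linarith
    _ = n ! * exp (-(v / 4)) * exp (v / 2) := by rw [mul_assoc, ← exp_add]; ring_nf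

theorem laguerreFun_abs_le_one (ℓ : ℕ) (v : ℝ) (hv : 0 ≤ v) : |laguerreFun ℓ v| ≤ 1 := by
  rw [laguerreFun, abs_mul, abs_exp]
  calc |laguerrePoly ℓ v| * exp (-v / 2) ≤ exp (v / 2) * exp (-v / 2) :=
        mul_le_mul_of_nonneg_right (abs_laguerrePoly_le_exp_half ℓ hv) (exp_pos _).le
    _ = 1 := by rw [← exp_add, neg_div, add_neg_cancel, exp_zero]
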